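/- Let (Σ,M) be an OP alphabet, K a semiring, S:(Σ,M)^+→K a regular (respectively strictly regular) series, and L⊆(Σ,M)^+ an operator precedence language. Then the series S∩L, defined by (S∩L)(w)=S(w) if w∈L and (S∩L)(w)=0 otherwise, is regular (respectively strictly regular). -/

import Mathlib

namespace WOP

/-- Precedence relations: yields precedence, equal in precedence, takes precedence. -/
inductive PrecRel where
  | lt | eq | gt
deriving DecidableEq

/-- An operator precedence matrix on `Σ ∪ {#}`, where `none` encodes `#`.
It assigns at most one precedence relation to each ordered pair, with
`# ⋖ a` and `a ⋗ #` for every letter `a`. -/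
structure OPM (A : Type) where
  rel : Option A → Option A → Option PrecRel
  hash_lt : ∀ a : A, rel none (some a) = some .lt
  hash_gt : ∀ a : A, rel (some a) none = some .gt

variable {A B K : Type}

/-- The letter of `#w#` at position `i` (positions `0` and `> |w|` carry `#`, i.e. `none`). -/
def letterAt (w : List A) (i : ℕ) : Option A :=
  if i = 0 then none else w[i - 1]?

section ChainRel

variable (M : OPM A) (L : ℕ → Option A)

mutual
  /-- `ChainMid M L k j`: there are `k = k_s < ... < k_m = j` with
  `L k_s ≐ L k_{s+1} ≐ ... ≐ L k_{m-1} ⋗ L k_m` and the gap condition between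
  consecutive elements. -/
  inductive ChainMid : ℕ → ℕ → Prop where
    | last {k j : ℕ} : M.rel (L k) (L j) = some .gt → ChainGap k j → ChainMid k j
    | step {k k' j : ℕ} : M.rel (L k) (L k') = some .eq → ChainGap k k' →
        ChainMid k' j → ChainMid k j

  /-- The gap condition between consecutive elements of a chain:
  adjacent positions or a chain. -/
  inductive ChainGap : ℕ → ℕ → Prop where
    | adj (k : ℕ) : ChainGap k (k + 1)
    | chain {k k' : ℕ} : Chain k k' → ChainGap k k'

  /-- The chain relation `i ⤳ j`: there are positions `i = k_1 < ... < k_m = j` with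
  `L k_1 ⋖ L k_2 ≐ ... ≐ L k_{m-1} ⋗ L k_m` such that consecutive `k`'s are adjacent
  or themselves related by `⤳`. -/
  inductive Chain : ℕ → ℕ → Prop where
    | mk {i k j : ℕ} : M.rel (L i) (L k) = some .lt → ChainGap i k → ChainMid k j →
        Chain i j
end

end ChainRel

/-- `(Σ,M)^+`: the set of nonempty words compatible with `M`, i.e. `0 ⤳ |w|+1` in `#w#`. -/
def OPWords (M : OPM A) : Set (List A) :=
  {w | w ≠ [] ∧ Chain M (letterAt w) 0 (w.length + 1)}

/-- An (unweighted) operator precedence automaton over the alphabet `A`. -/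
structure OPA (A : Type) where
  Q : Type
  fin : Fintype Q
  I : Set Q
  F : Set Q
  δpush : Set (Q × A × Q)
  δshift : Set (Q × A × Q)
  δpop : Set (Q × Q × Q)

/-- A weighted operator precedence automaton over the alphabet `A` and weights in `K`. -/
structure WOPA (A K : Type) extends OPA A where
  wtpush : Q × A × Q → K
  wtshift : Q × A × Q → K
  wtpop : Q × Q × Q → K

/-- A configuration: a stack of (symbol, state) pairs, a current state,
and the remaining input. -/
structure Config (A Q : Type) where
  stack : List (A × Q)
  state : Q
  input : List A

/-- The moves (transitions) an OPA may take. -/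
inductive Move (A Q : Type) where
  | push (q : Q) (b : A) (r : Q)
  | shift (q : Q) (b : A) (r : Q)
  | pop (q p r : Q)

/-- The topmost stack symbol (`none` = `#` for the empty stack). -/
def topSym {Q : Type} (st : List (A × Q)) : Option A := st.head?.map Prod.fst

/-- One step of an OPA on an OP alphabet `(A, M)`. -/
inductive Exec (M : OPM A) (T : OPA A) : Config A T.Q → Move A T.Q → Config A T.Q → Prop where
  | push {st : List (A × T.Q)} {q r : T.Q} {b : A} {x : List A} :
      M.rel (topSym st) (some b) = some .lt → (q, b, r) ∈ T.δpush →
      Exec M T ⟨st, q, b :: x⟩ (.push q b r) ⟨(b, q) :: st, r, x⟩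
  | shift {st : List (A × T.Q)} {p q r : T.Q} {a b : A} {x : List A} :
      M.rel (some a) (some b) = some .eq → (q, b, r) ∈ T.δshift →
      Exec M T ⟨(a, p) :: st, q, b :: x⟩ (.shift q b r) ⟨(b, p) :: st, r, x⟩
  | pop {st : List (A × T.Q)} {p q r : T.Q} {a : A} {x : List A} :
      M.rel (some a) x.head? = some .gt → (q, p, r) ∈ T.δpop →
      Exec M T ⟨(a, p) :: st, q, x⟩ (.pop q p r) ⟨st, r, x⟩

/-- Execution of a sequence of moves. -/
inductive ExecList (M : OPM A) (T : OPA A) :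
    Config A T.Q → List (Move A T.Q) → Config A T.Q → Prop where
  | nil (c : Config A T.Q) : ExecList M T c [] c
  | cons {c c' c'' : Config A T.Q} {m : Move A T.Q} {ms : List (Move A T.Q)} :
      Exec M T c m c' → ExecList M T c' ms c'' → ExecList M T c (m :: ms) c''

/-- The weight of a move of a weighted OPA. -/
def moveWt [Semiring K] (W : WOPA A K) : Move A W.Q → K
  | .push q b r => W.wtpush (q, b, r)
  | .shift q b r => W.wtshift (q, b, r)
  | .pop q p r => W.wtpop (q, p, r)

/-- The accepting runs of an OPA on `w`: an initial state, a sequence of moves from the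
initial configuration (empty stack, whole input) to a final configuration
(empty stack, input read), and the final state reached. -/
def AccRuns (M : OPM A) (T : OPA A) (w : List A) : Set (T.Q × List (Move A T.Q) × T.Q) :=
  {ρ | ρ.1 ∈ T.I ∧ ρ.2.2 ∈ T.F ∧ ExecList M T ⟨[], ρ.1, w⟩ ρ.2.1 ⟨[], ρ.2.2, []⟩}

/-- The behavior `⟦W⟧(w)`: the sum over all accepting runs of `W` on `w` of the product
(in order) of the weights of the moves of the run. -/
noncomputable def behavior [Semiring K] (M : OPM A) (W : WOPA A K) (w : List A) : K :=
  ∑ᶠ ρ ∈ AccRuns M W.toOPA w, (ρ.2.1.map (moveWt W)).prod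

/-- A weighted OPA is restricted (an rwOPA) if all pop weights are `1`. -/
def Restricted [Semiring K] (W : WOPA A K) : Prop := ∀ t ∈ W.δpop, W.wtpop t = 1

/-- A series `S : (Σ,M)^+ → K` is regular if it is the behavior of some wOPA. -/
def Regular [Semiring K] (M : OPM A) (S : List A → K) : Prop :=
  ∃ W : WOPA A K, ∀ w ∈ OPWords M, S w = behavior M W w

/-- A series is strictly regular if it is the behavior of some restricted wOPA. -/
def StrictlyRegular [Semiring K] (M : OPM A) (S : List A → K) : Prop :=
  ∃ W : WOPA A K, Restricted W ∧ ∀ w ∈ OPWords M, S w = behavior M W w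

/-- Unweighted acceptance. -/
def Accepts (M : OPM A) (T : OPA A) (w : List A) : Prop :=
  ∃ qI ms qF, qI ∈ T.I ∧ qF ∈ T.F ∧ ExecList M T ⟨[], qI, w⟩ ms ⟨[], qF, []⟩

/-- A language `L ⊆ (Σ,M)^+` is an operator precedence language if it is the set of
compatible words accepted by some OPA. -/
def IsOPL (M : OPM A) (L : Set (List A)) : Prop :=
  ∃ T : OPA A, L = {w | w ∈ OPWords M ∧ Accepts M T w}

/-- The intersection `S ∩ L` of a series with a language. -/
noncomputable def interSeries [Semiring K] (S : List A → K) (L : Set (List A))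
    (w : List A) : K :=
  open Classical in if w ∈ L then S w else 0

/-- `h : Σ → Γ` is OPM-preserving: `a ⊙ b` iff `h(a) ⊙ h(b)` for every relation `⊙`. -/
def OPMPreserving (M : OPM A) (M' : OPM B) (h : A → B) : Prop :=
  ∀ a b : A, M.rel (some a) (some b) = M'.rel (some (h a)) (some (h b))

/-- The image series `h(S)(v) = ∑_{w ∈ (Σ,M)^+, h(w) = v} S(w)`. -/
noncomputable def mapSeries [Semiring K] (M : OPM A) (h : A → B) (S : List A → K)
    (v : List B) : K :=
  ∑ᶠ w ∈ {w | w ∈ OPWords M ∧ w.map h = v}, S w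

/-- The pullback OPM `h⁻¹(M)` along `h : Σ' → Σ`. -/
def pullOPM (M : OPM A) (h : B → A) : OPM B where
  rel o₁ o₂ := M.rel (o₁.map h) (o₂.map h)
  hash_lt b := M.hash_lt (h b)
  hash_gt b := M.hash_gt (h b)

/-- The Nivat class `N(Σ,M,K)`: series obtained from a one-state restricted wOPA over a
pulled-back OP alphabet, intersected with an OPL, followed by the projection. -/
def NivatClass [Semiring K] (M : OPM A) (S : List A → K) : Prop :=
  ∃ (B : Type) (_ : Fintype B) (h : B → A) (W : WOPA B K) (L : Set (List B)),
    Restricted W ∧ (∃ q₀ : W.Q, ∀ q : W.Q, q = q₀) ∧ IsOPL (pullOPM M h) L ∧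
    ∀ v ∈ OPWords M,
      S v = mapSeries (pullOPM M h) h (interSeries (behavior (pullOPM M h) W) L) v

/-- An OPL step function: a finite sum `∑ kᵢ · 1_{Lᵢ}` with the `Lᵢ` OPLs forming a
partition of `(Σ,M)^+`. -/
def IsOPLStep [Semiring K] (M : OPM A) (S : List A → K) : Prop :=
  ∃ (n : ℕ) (k : Fin n → K) (L : Fin n → Set (List A)),
    (∀ i, IsOPL M (L i)) ∧ (∀ i j, i ≠ j → Disjoint (L i) (L j)) ∧
    (⋃ i, L i) = OPWords M ∧ ∀ i, ∀ w ∈ L i, S w = k i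

/-!
An OPL is recognized by a complete deterministic OPA, obtained by a subset construction on pairs
of states (`detOPA`). Every run of a wOPA `W` therefore extends uniquely to a run of the product
of `W` with this automaton, which carries the weights of `W`; that run is accepting iff the word
lies in `L`. So the product has the behavior of `W` on `L` and `0` elsewhere, and its pop weights
are those of `W`.
-/

theorem execList_append {M : OPM A} {T : OPA A} {c c' c'' : Config A T.Q}
    {ms ms' : List (Move A T.Q)} (h : ExecList M T c ms c')
    (h' : ExecList M T c' ms' c'') : ExecList M T c (ms ++ ms') c'' := by
  induction h with
  | nil => exact h'
  | cons hstep _ ih => exact .cons hstep (ih h')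

theorem topSym_congr {Q₁ Q₂ : Type} {s₁ : List (A × Q₁)} {s₂ : List (A × Q₂)}
    (h : s₁.map Prod.fst = s₂.map Prod.fst) : topSym s₁ = topSym s₂ := by
  cases s₁ <;> cases s₂ <;> simp_all [topSym]

theorem topSym_map_snd {Q Q' : Type} (f : Q → Q') (st : List (A × Q)) :
    topSym (st.map fun x => (x.1, f x.2)) = topSym st := by
  cases st <;> rfl

def Move.prec {Q : Type} : Move A Q → PrecRel
  | .push .. => .lt
  | .shift .. => .eq
  | .pop .. => .gt

theorem Exec.rel_eq {M : OPM A} {T : OPA A} {c c' : Config A T.Q} {m : Move A T.Q}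
    (h : Exec M T c m c') : M.rel (topSym c.stack) c.input.head? = some m.prec := by
  cases h <;> assumption

theorem not_exec_of_final {M : OPM A} {T : OPA A} {q : T.Q} {m : Move A T.Q}
    {c : Config A T.Q} : ¬ Exec M T ⟨[], q, []⟩ m c := nofun

abbrev prodOPA (T₁ T₂ : OPA A) : OPA A where
  Q := T₁.Q × T₂.Q
  fin := letI := T₁.fin; letI := T₂.fin; inferInstance
  I := {q | q.1 ∈ T₁.I ∧ q.2 ∈ T₂.I}
  F := {q | q.1 ∈ T₁.F ∧ q.2 ∈ T₂.F}
  δpush := {t | (t.1.1, t.2.1, t.2.2.1) ∈ T₁.δpush ∧ (t.1.2, t.2.1, t.2.2.2) ∈ T₂.δpush}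
  δshift := {t | (t.1.1, t.2.1, t.2.2.1) ∈ T₁.δshift ∧ (t.1.2, t.2.1, t.2.2.2) ∈ T₂.δshift}
  δpop := {t | (t.1.1, t.2.1.1, t.2.2.1) ∈ T₁.δpop ∧ (t.1.2, t.2.1.2, t.2.2.2) ∈ T₂.δpop}

section Projections

variable {Q₁ Q₂ : Type}

def Move.fst : Move A (Q₁ × Q₂) → Move A Q₁
  | .push q b r => .push q.1 b r.1
  | .shift q b r => .shift q.1 b r.1
  | .pop q p r => .pop q.1 p.1 r.1

def Move.snd : Move A (Q₁ × Q₂) → Move A Q₂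
  | .push q b r => .push q.2 b r.2
  | .shift q b r => .shift q.2 b r.2
  | .pop q p r => .pop q.2 p.2 r.2

def Config.fst (c : Config A (Q₁ × Q₂)) : Config A Q₁ :=
  ⟨c.stack.map fun x => (x.1, x.2.1), c.state.1, c.input⟩

def Config.snd (c : Config A (Q₁ × Q₂)) : Config A Q₂ :=
  ⟨c.stack.map fun x => (x.1, x.2.2), c.state.2, c.input⟩

theorem Config.eq_of_fst_eq_final {c : Config A (Q₁ × Q₂)} {q : Q₁}
    (h : c.fst = ⟨[], q, []⟩) : c = ⟨[], (q, c.state.2), []⟩ := by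
  obtain ⟨st, ⟨q', S⟩, x⟩ := c
  simp only [Config.fst, Config.mk.injEq, List.map_eq_nil_iff] at h
  obtain ⟨rfl, rfl, rfl⟩ := h
  rfl

theorem Move.ext_fst_snd {m m' : Move A (Q₁ × Q₂)} (h₁ : m.fst = m'.fst)
    (h₂ : m.snd = m'.snd) : m = m' := by
  cases m <;> cases m' <;> simp_all [Move.fst, Move.snd, Prod.ext_iff]

theorem Move.list_ext_fst_snd :
    ∀ {ms ms' : List (Move A (Q₁ × Q₂))}, ms.map Move.fst = ms'.map Move.fst →
      ms.map Move.snd = ms'.map Move.snd → ms = ms'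
  | [], [], _, _ => rfl
  | m :: ms, m' :: ms', h₁, h₂ => by
    simp only [List.map_cons, List.cons.injEq] at h₁ h₂
    rw [Move.ext_fst_snd h₁.1 h₂.1, list_ext_fst_snd h₁.2 h₂.2]

end Projections

section ProdExec

variable {M : OPM A} {T₁ T₂ : OPA A} {c c' : Config A (prodOPA T₁ T₂).Q}

theorem Exec.fst {m : Move A (prodOPA T₁ T₂).Q} (h : Exec M (prodOPA T₁ T₂) c m c') :
    Exec M T₁ c.fst m.fst c'.fst := by
  cases h with
  | push hrel hδ => exact .push (by simpa only [topSym_map_snd] using hrel) hδ.1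
  | shift hrel hδ => exact .shift hrel hδ.1
  | pop hrel hδ => exact .pop hrel hδ.1

theorem Exec.snd {m : Move A (prodOPA T₁ T₂).Q} (h : Exec M (prodOPA T₁ T₂) c m c') :
    Exec M T₂ c.snd m.snd c'.snd := by
  cases h with
  | push hrel hδ => exact .push (by simpa only [topSym_map_snd] using hrel) hδ.2
  | shift hrel hδ => exact .shift hrel hδ.2
  | pop hrel hδ => exact .pop hrel hδ.2

theorem ExecList.fst {ms : List (Move A (prodOPA T₁ T₂).Q)}
    (h : ExecList M (prodOPA T₁ T₂) c ms c') :
    ExecList M T₁ c.fst (ms.map Move.fst) c'.fst := by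
  induction h with
  | nil => exact .nil _
  | cons hstep _ ih => exact .cons hstep.fst ih

theorem ExecList.snd {ms : List (Move A (prodOPA T₁ T₂).Q)}
    (h : ExecList M (prodOPA T₁ T₂) c ms c') :
    ExecList M T₂ c.snd (ms.map Move.snd) c'.snd := by
  induction h with
  | nil => exact .nil _
  | cons hstep _ ih => exact .cons hstep.snd ih

end ProdExec

section Determinization

variable (T : OPA A)

/-! A state of `detOPA T` is the set of pairs `(p, q)` such that some run of `T` reaches `q`, where
`p` is the state stored with the topmost stack symbol (the initial state if the stack is
empty). -/

def initSet : Set (T.Q × T.Q) := {pr | pr.1 = pr.2 ∧ pr.1 ∈ T.I}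

def pushSet (S : Set (T.Q × T.Q)) (b : A) : Set (T.Q × T.Q) :=
  {pr | ∃ p, (p, pr.1) ∈ S ∧ (pr.1, b, pr.2) ∈ T.δpush}

def shiftSet (S : Set (T.Q × T.Q)) (b : A) : Set (T.Q × T.Q) :=
  {pr | ∃ q, (pr.1, q) ∈ S ∧ (q, b, pr.2) ∈ T.δshift}

def popSet (S P : Set (T.Q × T.Q)) : Set (T.Q × T.Q) :=
  {pr | ∃ p q, (pr.1, p) ∈ P ∧ (p, q) ∈ S ∧ (q, p, pr.2) ∈ T.δpop}

noncomputable abbrev detOPA : OPA A where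
  Q := Set (T.Q × T.Q)
  fin := letI := T.fin; Fintype.ofFinite _
  I := {initSet T}
  F := {S | ∃ pr ∈ S, pr.2 ∈ T.F}
  δpush := {t | t.2.2 = pushSet T t.1 t.2.1}
  δshift := {t | t.2.2 = shiftSet T t.1 t.2.1}
  δpop := {t | t.2.2 = popSet T t.1 t.2.1}

variable {T} {M : OPM A}

theorem detOPA_exec_unique {c c₁ c₂ : Config A (detOPA T).Q} {m₁ m₂ : Move A (detOPA T).Q}
    (h₁ : Exec M (detOPA T) c m₁ c₁) (h₂ : Exec M (detOPA T) c m₂ c₂) :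
    m₁ = m₂ ∧ c₁ = c₂ := by
  have hprec := h₁.rel_eq.symm.trans h₂.rel_eq
  cases h₁ <;> cases h₂ <;> simp_all [Move.prec]

theorem detOPA_execList_unique {c d₁ d₂ : Config A (detOPA T).Q}
    {ms₁ ms₂ : List (Move A (detOPA T).Q)}
    (h₁ : ExecList M (detOPA T) c ms₁ d₁) (h₂ : ExecList M (detOPA T) c ms₂ d₂)
    (hd₁ : ∀ m d, ¬ Exec M (detOPA T) d₁ m d) (hd₂ : ∀ m d, ¬ Exec M (detOPA T) d₂ m d) :
    ms₁ = ms₂ ∧ d₁ = d₂ := by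
  induction h₁ generalizing ms₂ with
  | nil => cases h₂ with
    | nil => exact ⟨rfl, rfl⟩
    | cons hstep _ => exact (hd₁ _ _ hstep).elim
  | cons hstep h₁' ih => cases h₂ with
    | nil => exact (hd₂ _ _ hstep).elim
    | cons hstep₂ h₂' =>
      obtain ⟨rfl, rfl⟩ := detOPA_exec_unique hstep hstep₂
      obtain ⟨rfl, rfl⟩ := ih h₂' hd₁
      exact ⟨rfl, rfl⟩

theorem detOPA_execList_final_unique {c : Config A (detOPA T).Q}
    {ms₁ ms₂ : List (Move A (detOPA T).Q)} {S₁ S₂ : (detOPA T).Q}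
    (h₁ : ExecList M (detOPA T) c ms₁ ⟨[], S₁, []⟩)
    (h₂ : ExecList M (detOPA T) c ms₂ ⟨[], S₂, []⟩) : ms₁ = ms₂ ∧ S₁ = S₂ := by
  obtain ⟨hms, hS⟩ := detOPA_execList_unique h₁ h₂ (fun _ _ => not_exec_of_final)
    (fun _ _ => not_exec_of_final)
  exact ⟨hms, congrArg Config.state hS⟩

end Determinization

section Lift

variable {T₁ T : OPA A} {M : OPM A}

theorem Exec.lift_detOPA {c : Config A (prodOPA T₁ (detOPA T)).Q} {m : Move A T₁.Q}
    {d : Config A T₁.Q} (h : Exec M T₁ c.fst m d) :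
    ∃ m' c', Exec M (prodOPA T₁ (detOPA T)) c m' c' ∧ c'.fst = d ∧ m'.fst = m := by
  obtain ⟨st, ⟨q, S⟩, x⟩ := c
  generalize hc : Config.fst _ = c₁ at h
  cases h with
  | push hrel hδ =>
    obtain ⟨rfl, rfl, rfl⟩ := Config.mk.inj hc
    exact ⟨.push (q, S) _ (_, pushSet T S _), _, .push (by simpa only [topSym_map_snd] using hrel) ⟨hδ, rfl⟩, rfl, rfl⟩
  | shift hrel hδ =>
    obtain ⟨hst, rfl, rfl⟩ := Config.mk.inj hc
    obtain _ | ⟨⟨a, p, P⟩, st⟩ := st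
    · cases hst
    obtain ⟨⟨rfl, rfl⟩, rfl⟩ := List.cons.inj hst
    exact ⟨.shift (q, S) _ (_, shiftSet T S _), _, .shift hrel ⟨hδ, rfl⟩, rfl, rfl⟩
  | pop hrel hδ =>
    obtain ⟨hst, rfl, rfl⟩ := Config.mk.inj hc
    obtain _ | ⟨⟨a, p, P⟩, st⟩ := st
    · cases hst
    obtain ⟨⟨rfl, rfl⟩, rfl⟩ := List.cons.inj hst
    exact ⟨.pop (q, S) (p, P) (_, popSet T S P), _, .pop hrel ⟨hδ, rfl⟩, rfl, rfl⟩

theorem ExecList.lift_detOPA {c₁ d : Config A T₁.Q} {ms : List (Move A T₁.Q)}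
    (h : ExecList M T₁ c₁ ms d) {c : Config A (prodOPA T₁ (detOPA T)).Q} (hc : c.fst = c₁) :
    ∃ ms' c', ExecList M (prodOPA T₁ (detOPA T)) c ms' c' ∧ c'.fst = d ∧
      ms'.map Move.fst = ms := by
  induction h generalizing c with
  | nil => exact ⟨[], c, .nil _, hc, rfl⟩
  | cons hstep _ ih =>
    subst hc
    obtain ⟨m', c', hstep', rfl, rfl⟩ := hstep.lift_detOPA
    obtain ⟨ms', c'', hrun, hc'', rfl⟩ := ih rfl
    exact ⟨m' :: ms', c'', .cons hstep' hrun, hc'', rfl⟩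

end Lift

section Completeness

variable {T : OPA A} {M : OPM A}

def Tracks (r₀ : T.Q) : List (A × (T.Q × Set (T.Q × T.Q))) → T.Q × Set (T.Q × T.Q) → Prop
  | [], s => (r₀, s.1) ∈ s.2
  | (_, t) :: st, s => (t.1, s.1) ∈ s.2 ∧ Tracks r₀ st t

theorem Tracks.of_top {r₀ : T.Q} {st : List (A × (T.Q × Set (T.Q × T.Q)))}
    {s : T.Q × Set (T.Q × T.Q)} (h : Tracks r₀ st s) :
    ∃ p, (p, s.1) ∈ s.2 ∧ ∀ s', (p, s'.1) ∈ s'.2 → Tracks r₀ st s' := by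
  cases st with
  | nil => exact ⟨r₀, h, fun _ h' => h'⟩
  | cons t st => exact ⟨t.2.1, h.1, fun _ h' => ⟨h', h.2⟩⟩

theorem Exec.tracks {r₀ : T.Q} {c c' : Config A (prodOPA T (detOPA T)).Q}
    {m : Move A (prodOPA T (detOPA T)).Q} (h : Exec M (prodOPA T (detOPA T)) c m c')
    (hc : Tracks r₀ c.stack c.state) : Tracks r₀ c'.stack c'.state := by
  cases h with
  | push _ hδ =>
    obtain ⟨p, hp, -⟩ := hc.of_top
    exact ⟨(hδ.2 : _ = pushSet T _ _) ▸ ⟨p, hp, hδ.1⟩, hc⟩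
  | shift _ hδ => exact ⟨(hδ.2 : _ = shiftSet T _ _) ▸ ⟨_, hc.1, hδ.1⟩, hc.2⟩
  | pop _ hδ =>
    obtain ⟨p, hp, hst⟩ := hc.2.of_top
    exact hst _ ((hδ.2 : _ = popSet T _ _) ▸ ⟨_, _, hp, hc.1, hδ.1⟩)

theorem ExecList.tracks {r₀ : T.Q} {c c' : Config A (prodOPA T (detOPA T)).Q}
    {ms : List (Move A (prodOPA T (detOPA T)).Q)}
    (h : ExecList M (prodOPA T (detOPA T)) c ms c')
    (hc : Tracks r₀ c.stack c.state) : Tracks r₀ c'.stack c'.state := by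
  induction h with
  | nil => exact hc
  | cons hstep _ ih => exact ih (hstep.tracks hc)

theorem accepts_detOPA_of_accepts {w : List A} (h : Accepts M T w) :
    Accepts M (detOPA T) w := by
  obtain ⟨qI, ms, qF, hI, hF, hrun⟩ := h
  obtain ⟨ms', c', hrun', hc', -⟩ :=
    hrun.lift_detOPA (T := T) (c := ⟨[], (qI, initSet T), w⟩) rfl
  rw [Config.eq_of_fst_eq_final hc'] at hrun'
  have hfinal : (qI, qF) ∈ c'.state.2 := hrun'.tracks (r₀ := qI) ⟨rfl, hI⟩
  exact ⟨initSet T, ms'.map Move.snd, c'.state.2, rfl, ⟨_, hfinal, hF⟩, hrun'.snd⟩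

end Completeness

section Soundness

variable {T : OPA A} {M : OPM A}

/-- Each pair `(p, q)` of a subset is realized by a run of `T` from `p` to `q` over the input
read since `p` was stored. The run is required under every stack carrying the symbols of the
deterministic stack, since only symbols are seen by the precedence checks: this is what allows
replaying it once the states below are known. -/
def Realized (M : OPM A) (w : List A) : List A → Set (T.Q × T.Q) →
    List (A × Set (T.Q × T.Q)) → Prop
  | u, S, [] => ∀ p q, (p, q) ∈ S → p ∈ T.I ∧
      ∃ ms, ExecList M T ⟨[], p, w⟩ ms ⟨[], q, u⟩
  | u, S, (a, P) :: stD => ∃ v, Realized M w v P stD ∧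
      ∀ p q, (p, q) ∈ S → ∀ σ : List (A × T.Q), σ.map Prod.fst = stD.map Prod.fst →
        ∃ ms, ExecList M T ⟨σ, p, v⟩ ms ⟨(a, p) :: σ, q, u⟩

theorem Realized.popSet {w x : List A} {a : A} {S P : Set (T.Q × T.Q)}
    {stD : List (A × Set (T.Q × T.Q))} (hrel : M.rel (some a) x.head? = some .gt)
    (h : Realized M w x S ((a, P) :: stD)) : Realized M w x (popSet T S P) stD := by
  obtain ⟨v, hP, hS⟩ := h
  match stD, hP with
  | [], hP =>
    rintro p₀ r ⟨p, q, hp₀p, hpq, hδ⟩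
    obtain ⟨hI, ms₀, hrun₀⟩ := hP p₀ p hp₀p
    obtain ⟨ms₁, hrun₁⟩ := hS p q hpq [] rfl
    exact ⟨hI, _, execList_append hrun₀ (execList_append hrun₁ (.cons (.pop hrel hδ) (.nil _)))⟩
  | (a₂, P₂) :: stD₂, hP =>
    obtain ⟨v₂, hP₂, hP⟩ := hP
    refine ⟨v₂, hP₂, ?_⟩
    rintro p₀ r ⟨p, q, hp₀p, hpq, hδ⟩ σ hσ
    obtain ⟨ms₀, hrun₀⟩ := hP p₀ p hp₀p σ hσ
    obtain ⟨ms₁, hrun₁⟩ := hS p q hpq ((a₂, p₀) :: σ) (by simp [hσ])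
    exact ⟨_, execList_append hrun₀ (execList_append hrun₁ (.cons (.pop hrel hδ) (.nil _)))⟩

theorem Exec.realized {w : List A} {c c' : Config A (detOPA T).Q} {m : Move A (detOPA T).Q}
    (h : Exec M (detOPA T) c m c') (hc : Realized M w c.input c.state c.stack) :
    Realized M w c'.input c'.state c'.stack := by
  cases h with
  | push hrel hδ =>
    simp only [Set.mem_ofPred_eq] at hδ
    subst hδ
    refine ⟨_, hc, ?_⟩
    rintro q r ⟨p, -, hδ⟩ σ hσ
    exact ⟨_, .cons (.push (by rwa [topSym_congr hσ]) hδ) (.nil _)⟩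
  | shift hrel hδ =>
    simp only [Set.mem_ofPred_eq] at hδ
    subst hδ
    obtain ⟨v, hP, hS⟩ := hc
    refine ⟨v, hP, ?_⟩
    rintro p r ⟨q, hpq, hδ⟩ σ hσ
    obtain ⟨ms, hrun⟩ := hS p q hpq σ hσ
    exact ⟨_, execList_append hrun (.cons (.shift hrel hδ) (.nil _))⟩
  | pop hrel hδ =>
    simp only [Set.mem_ofPred_eq] at hδ
    subst hδ
    exact hc.popSet hrel

theorem ExecList.realized {w : List A} {c c' : Config A (detOPA T).Q}
    {ms : List (Move A (detOPA T).Q)} (h : ExecList M (detOPA T) c ms c')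
    (hc : Realized M w c.input c.state c.stack) : Realized M w c'.input c'.state c'.stack := by
  induction h with
  | nil => exact hc
  | cons hstep _ ih => exact ih (hstep.realized hc)

theorem accepts_of_accepts_detOPA {w : List A} (h : Accepts M (detOPA T) w) :
    Accepts M T w := by
  obtain ⟨_, ms, S, rfl, ⟨⟨p, q⟩, hpq, hq⟩, hrun⟩ := h
  have hinit : Realized M w w (initSet T) [] := by
    rintro p q ⟨hpq, hp⟩
    obtain rfl : p = q := hpq
    exact ⟨hp, [], .nil _⟩
  obtain ⟨hp, ms', hrun'⟩ := hrun.realized hinit p q hpq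
  exact ⟨p, ms', q, hp, hq, hrun'⟩

end Soundness

section Product

variable {T₁ T : OPA A} {M : OPM A} {w : List A}

theorem accRuns_prodOPA_detOPA_eq_empty (h : ¬ Accepts M T w) :
    AccRuns M (prodOPA T₁ (detOPA T)) w = ∅ :=
  Set.eq_empty_of_forall_notMem fun _ ⟨hI, hF, hrun⟩ =>
    h (accepts_of_accepts_detOPA ⟨_, _, _, hI.2, hF.2, hrun.snd⟩)

def runFst (ρ : (prodOPA T₁ (detOPA T)).Q × List (Move A (prodOPA T₁ (detOPA T)).Q) ×
    (prodOPA T₁ (detOPA T)).Q) : T₁.Q × List (Move A T₁.Q) × T₁.Q :=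
  (ρ.1.1, ρ.2.1.map Move.fst, ρ.2.2.1)

theorem injOn_runFst : Set.InjOn runFst (AccRuns M (prodOPA T₁ (detOPA T)) w) := by
  rintro ⟨⟨q, S⟩, ms, ⟨q', S'⟩⟩ ⟨hI, -, hrun⟩ ⟨⟨r, R⟩, ms₂, ⟨r', R'⟩⟩ ⟨hI₂, -, hrun₂⟩ heq
  simp only [runFst, Prod.mk.injEq] at heq
  obtain ⟨rfl, hms, rfl⟩ := heq
  obtain rfl : S = R := hI.2.trans hI₂.2.symm
  obtain ⟨hms', rfl⟩ := detOPA_execList_final_unique hrun.snd hrun₂.snd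
  rw [Move.list_ext_fst_snd hms hms']

theorem surjOn_runFst (h : Accepts M T w) :
    Set.SurjOn runFst (AccRuns M (prodOPA T₁ (detOPA T)) w) (AccRuns M T₁ w) := by
  rintro ⟨qI, ms, qF⟩ ⟨hI, hF, hrun⟩
  dsimp only at hI hF hrun
  obtain ⟨ms', c', hrun', hc', hms'⟩ :=
    hrun.lift_detOPA (T := T) (c := ⟨[], (qI, initSet T), w⟩) rfl
  rw [Config.eq_of_fst_eq_final hc'] at hrun'
  obtain ⟨_, _, SF, rfl, hSF, hrunD⟩ := accepts_detOPA_of_accepts h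
  obtain ⟨-, hS⟩ := detOPA_execList_final_unique hrun'.snd hrunD
  exact ⟨((qI, initSet T), ms', (qF, c'.state.2)), ⟨⟨hI, rfl⟩, ⟨hF, hS ▸ hSF⟩, hrun'⟩,
    by simp [runFst, hms']⟩

end Product

section Weighted

variable [Semiring K] {M : OPM A}

def WOPA.prod (W : WOPA A K) (T : OPA A) : WOPA A K where
  toOPA := prodOPA W.toOPA T
  wtpush t := W.wtpush (t.1.1, t.2.1, t.2.2.1)
  wtshift t := W.wtshift (t.1.1, t.2.1, t.2.2.1)
  wtpop t := W.wtpop (t.1.1, t.2.1.1, t.2.2.1)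

theorem Restricted.prod {W : WOPA A K} (h : Restricted W) (T : OPA A) :
    Restricted (W.prod T) :=
  fun _ ht => h _ ht.1

theorem moveWt_prod (W : WOPA A K) (T : OPA A) (m : Move A (W.prod T).Q) :
    moveWt (W.prod T) m = moveWt W m.fst := by
  cases m <;> rfl

theorem behavior_prod_detOPA (W : WOPA A K) (T : OPA A) (w : List A) :
    behavior M (W.prod (detOPA T)) w = interSeries (behavior M W) {w | Accepts M T w} w := by
  rw [interSeries]
  split_ifs with h
  · refine finsum_mem_eq_of_bijOn runFst ⟨fun ρ ⟨hI, hF, hrun⟩ => ⟨hI.1, hF.1, hrun.fst⟩,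
      injOn_runFst, surjOn_runFst h⟩ fun ρ _ => ?_
    simp only [runFst, List.map_map]
    congr 1
    exact List.map_congr_left fun m _ => moveWt_prod W _ m
  · rw [behavior, show AccRuns M (W.prod (detOPA T)).toOPA w = ∅ from
      accRuns_prodOPA_detOPA_eq_empty h, finsum_mem_empty]

end Weighted

/-- The intersection of a regular (resp. strictly regular) series with an OPL is
regular (resp. strictly regular). -/
theorem inter_regular {A K : Type} [Fintype A] [Semiring K] (M : OPM A)
    (S : List A → K) (L : Set (List A)) (hL : IsOPL M L) :
    (Regular M S → Regular M (interSeries S L)) ∧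
    (StrictlyRegular M S → StrictlyRegular M (interSeries S L)) := by
  obtain ⟨T, rfl⟩ := hL
  have hprod : ∀ W : WOPA A K, (∀ w ∈ OPWords M, S w = behavior M W w) →
      ∀ w ∈ OPWords M, interSeries S {w | w ∈ OPWords M ∧ Accepts M T w} w =
        behavior M (W.prod (detOPA T)) w := by
    intro W hW w hw
    by_cases hacc : Accepts M T w <;>
      simp [behavior_prod_detOPA, interSeries, hw, hacc, hW w hw]
  exact ⟨fun ⟨W, hW⟩ => ⟨_, hprod W hW⟩,
    fun ⟨W, hres, hW⟩ => ⟨_, hres.prod _, hprod W hW⟩⟩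

end WOP
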